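/- arXiv:1205.2097 — 2 statements merged into one kernel-verified Lean document; each statement's English description precedes it below -/
import Mathlib

section
/- The even moments of the semicircle distribution on [-2,2] are the Catalan numbers and the odd moments vanish: the integral of t^n * sqrt(4-t^2)/(2*pi) dt over [-2,2] equals Cat_{n/2} if n is even and 0 if n is odd. -/
/-!
Differentiating `t ^ (n + 1) * (r ^ 2 - t ^ 2) ^ (3 / 2)`, which vanishes at `±r`, gives the
moment recurrence `(n + 4) m (n + 2) = (n + 1) r ^ 2 m n` for the weight `√(r ^ 2 - t ^ 2)` on
`[-r, r]`. For `n = 2k` this is the Catalan recurrence `(k + 2) C (k + 1) = 2 (2k + 1) C k`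
rescaled by `(r / 2) ^ 2`, starting from `m 0 = π r ^ 2 / 2`, the area of a half disc.
Odd moments vanish because the integrand is odd.
-/

open Real intervalIntegral

theorem Function.Odd.intervalIntegral_eq_zero {E : Type*} [NormedAddCommGroup E]
    [NormedSpace ℝ E] {f : ℝ → E} (hf : Function.Odd f) (a : ℝ) :
    ∫ x in -a..a, f x = 0 := by
  have h := integral_comp_neg (a := -a) (b := a) f
  simp only [hf _, integral_neg, neg_neg] at h
  have : IsAddTorsionFree E := .of_isTorsionFree ℝ E
  exact self_eq_neg.mp h.symm

theorem integral_sqrt_sq_sub_sq {r : ℝ} (hr : 0 ≤ r) :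
    ∫ x in -r..r, √(r ^ 2 - x ^ 2) = π * r ^ 2 / 2 := by
  have hscale : ∀ u : ℝ, √(r ^ 2 - (r * u) ^ 2) = r * √(1 - u ^ 2) := fun u => by
    rw [show r ^ 2 - (r * u) ^ 2 = r ^ 2 * (1 - u ^ 2) by ring, sqrt_mul (sq_nonneg r),
      sqrt_sq hr]
  have h := smul_integral_comp_mul_left (fun x => √(r ^ 2 - x ^ 2)) r (a := -1) (b := 1)
  simp only [hscale, integral_const_mul, integral_sqrt_one_sub_sq, mul_neg, mul_one,
    smul_eq_mul] at h
  rw [← h]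
  ring

theorem hasDerivAt_pow_succ_mul_sqrt_cube {a t : ℝ} (ht : 0 < a - t ^ 2) (n : ℕ) :
    HasDerivAt (fun t => t ^ (n + 1) * ((a - t ^ 2) * √(a - t ^ 2)))
      ((n + 1) * a * (t ^ n * √(a - t ^ 2)) - (n + 4) * (t ^ (n + 2) * √(a - t ^ 2))) t := by
  have hu : HasDerivAt (fun t : ℝ => a - t ^ 2) (-(2 * t)) t := by
    simpa using (hasDerivAt_pow 2 t).const_sub a
  refine ((hasDerivAt_pow (n + 1) t).fun_mul (hu.fun_mul (hu.sqrt ht.ne'))).congr_deriv ?_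
  have hs : √(a - t ^ 2) ^ 2 = a - t ^ 2 := sq_sqrt ht.le
  have hs0 : √(a - t ^ 2) ≠ 0 := (sqrt_pos.mpr ht).ne'
  field_simp
  push_cast
  linear_combination t ^ (n + 2) * hs

theorem integral_pow_add_two_mul_sqrt_sq_sub_sq {r : ℝ} (hr : 0 ≤ r) (n : ℕ) :
    (n + 4) * ∫ t in -r..r, t ^ (n + 2) * √(r ^ 2 - t ^ 2) =
      (n + 1) * r ^ 2 * ∫ t in -r..r, t ^ n * √(r ^ 2 - t ^ 2) := by
  have hint : ∀ m : ℕ,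
      IntervalIntegrable (fun t : ℝ => t ^ m * √(r ^ 2 - t ^ 2)) MeasureTheory.volume (-r) r :=
    fun m => by apply Continuous.intervalIntegrable; fun_prop
  have hFTC := integral_eq_sub_of_hasDerivAt_of_le (neg_le_self hr)
    (f := fun t => t ^ (n + 1) * ((r ^ 2 - t ^ 2) * √(r ^ 2 - t ^ 2))) (by fun_prop)
    (fun t ht => hasDerivAt_pow_succ_mul_sqrt_cube (by nlinarith [ht.1, ht.2]) n)
    (((hint n).const_mul _).sub ((hint (n + 2)).const_mul _))
  rw [integral_sub ((hint n).const_mul _) ((hint (n + 2)).const_mul _), integral_const_mul,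
    integral_const_mul] at hFTC
  norm_num at hFTC
  linarith

theorem succ_succ_mul_catalan_succ (n : ℕ) :
    (n + 2) * catalan (n + 1) = 2 * (2 * n + 1) * catalan n := by
  refine Nat.eq_of_mul_eq_mul_left n.succ_pos ?_
  calc (n + 1) * ((n + 2) * catalan (n + 1)) = (n + 1) * (n + 1).centralBinom := by
        rw [← succ_mul_catalan_eq_centralBinom]
    _ = 2 * (2 * n + 1) * n.centralBinom := Nat.succ_mul_centralBinom_succ n
    _ = (n + 1) * (2 * (2 * n + 1) * catalan n) := by
        rw [← succ_mul_catalan_eq_centralBinom]; ring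

theorem integral_pow_two_mul_mul_sqrt_sq_sub_sq {r : ℝ} (hr : 0 ≤ r) (k : ℕ) :
    ∫ t in -r..r, t ^ (2 * k) * √(r ^ 2 - t ^ 2) =
      catalan k * (r / 2) ^ (2 * k) * (π * r ^ 2 / 2) := by
  induction k with
  | zero => simpa using integral_sqrt_sq_sub_sq hr
  | succ k ih =>
    have hrec := integral_pow_add_two_mul_sqrt_sq_sub_sq hr (2 * k)
    have hcat : ((k : ℝ) + 2) * catalan (k + 1) = 2 * (2 * k + 1) * catalan k := by
      exact_mod_cast succ_succ_mul_catalan_succ k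
    rw [ih] at hrec
    rw [show 2 * (k + 1) = 2 * k + 2 by ring]
    apply mul_left_cancel₀ (show (2 * k + 4 : ℝ) ≠ 0 by positivity)
    push_cast at hrec
    linear_combination hrec - (r / 2) ^ (2 * k + 2) * (π * r ^ 2) * hcat

/-- The moments of the semicircle distribution on `[-2,2]`: the even moments are the
Catalan numbers and the odd moments vanish. -/
theorem semicircle_moments (n : ℕ) :
    (∫ t in (-2 : ℝ)..2, t ^ n * (Real.sqrt (4 - t ^ 2) / (2 * π))) =
      if Even n then (catalan (n / 2) : ℝ) else 0 := by
  have hnormalize : ∫ t in (-2 : ℝ)..2, t ^ n * (√(4 - t ^ 2) / (2 * π)) =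
      (∫ t in (-2 : ℝ)..2, t ^ n * √(2 ^ 2 - t ^ 2)) / (2 * π) := by
    rw [← integral_div]
    norm_num [mul_div_assoc]
  rw [hnormalize]
  split_ifs with hn
  · obtain ⟨k, rfl⟩ := hn.two_dvd
    rw [integral_pow_two_mul_mul_sqrt_sq_sub_sq zero_le_two, Nat.mul_div_cancel_left _ two_pos]
    field_simp
    ring
  · have hodd : Function.Odd fun t : ℝ => t ^ n * √(2 ^ 2 - t ^ 2) := fun t => by
      simp [(Nat.not_even_iff_odd.mp hn).neg_pow]
    rw [hodd.intervalIntegral_eq_zero, zero_div]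
end

section
/- Two numerical sequences (m_n) and (kappa_n) satisfy the free moment-cumulant relations m_n = sum over non-crossing partitions pi of [n] of the product over blocks B of kappa_{|B|} for all n ≥ 1, if and only if the ordinary generating functions L(z) = 1 + sum m_n z^n and K(z) = 1 + sum kappa_n z^n satisfy L(z) = K(z * L(z)) in the formal power series ring. -/
/-!
Let `B = {0 = b₀ < b₁ < ⋯ < b_{j-1}}` be the block of a non-crossing partition of
`{0, …, n-1}` that contains `0`. Every other block lies in one of the gaps between consecutive
elements of `B` (or after its last element), and the partition is the same thing as `B` together
with an arbitrary non-crossing partition of each gap. Writing `c₀, …, c_{j-1}` for the gap sizes,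
which sum to `n - j`, this gives `m_n = ∑_j κ_j ∑_c m_{c₀} ⋯ m_{c_{j-1}}`, which is the
coefficient of `zⁿ` in `K(zL) = ∑_j κ_j z^j L^j`. Since that coefficient involves only the
coefficients of `L` below `n`, the equation `L = K(zL)` has exactly one solution.
-/

open Classical PowerSeries

/-- Non-crossing condition for a set partition of `{1,…,n}`. -/
def IsNonCrossing {n : ℕ} (π : Finpartition (Finset.univ : Finset (Fin n))) : Prop :=
  ¬ ∃ a b c d : Fin n, a < b ∧ b < c ∧ c < d ∧
    ∃ B ∈ π.parts, ∃ B' ∈ π.parts, B ≠ B' ∧ a ∈ B ∧ c ∈ B ∧ b ∈ B' ∧ d ∈ B'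

/-- The free moment-cumulant sum `∑_{π ∈ NC(n)} ∏_{B ∈ π} κ_{|B|}`. -/
noncomputable def ncMomentSum (κ : ℕ → ℂ) (n : ℕ) : ℂ :=
  ∑ π ∈ Finset.univ.filter
      (fun π : Finpartition (Finset.univ : Finset (Fin n)) => IsNonCrossing π),
    ∏ B ∈ π.parts, κ B.card

/-- Composition `K(z·L(z))` of formal power series, defined coefficientwise (the inner
series `z·L(z)` has zero constant term, so each coefficient is a finite sum). -/
noncomputable def substZL (K L : PowerSeries ℂ) : PowerSeries ℂ :=
  PowerSeries.mk fun n =>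
    ∑ j ∈ Finset.range (n + 1),
      PowerSeries.coeff j K * PowerSeries.coeff n ((PowerSeries.X * L) ^ j)

open Finset

namespace Finpartition

variable {α β : Type*} [LinearOrder α] [LinearOrder β] {S : Finset α}

def NonCrossing (π : Finpartition S) : Prop :=
  ¬ ∃ a b c d : α, a < b ∧ b < c ∧ c < d ∧
    ∃ B ∈ π.parts, ∃ B' ∈ π.parts, B ≠ B' ∧ a ∈ B ∧ c ∈ B ∧ b ∈ B' ∧ d ∈ B'

lemma image_injOn_parts (P : Finpartition S) {f : α → β} (hf : Set.InjOn f S) :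
    Set.InjOn (Finset.image f) P.parts := fun _ hC _ hD h =>
  image_injOn_powerset_of_injOn hf (by simpa using P.le hC) (by simpa using P.le hD) h

def image (P : Finpartition S) (f : α → β) (hf : Set.InjOn f S) : Finpartition (S.image f) where
  parts := P.parts.image (Finset.image f)
  supIndep := by
    rw [supIndep_iff_pairwiseDisjoint, coe_image]
    rintro _ ⟨C, hC, rfl⟩ _ ⟨D, hD, rfl⟩ hCD
    have hdisj := P.disjoint hC hD (ne_of_apply_ne _ hCD)
    rw [Function.onFun, id, id, disjoint_iff_ne] at hdisj ⊢
    simp only [mem_image]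
    rintro _ ⟨a, ha, rfl⟩ _ ⟨b, hb, rfl⟩ hab
    exact hdisj a ha b hb (hf (P.le hC ha) (P.le hD hb) hab)
  sup_parts := by
    rw [sup_image]
    conv_rhs => rw [← P.sup_parts]
    rw [sup_eq_biUnion, sup_eq_biUnion, biUnion_image]
    rfl
  bot_notMem := by
    simp only [bot_eq_empty, mem_image, image_eq_empty]
    rintro ⟨C, hC, rfl⟩
    exact P.bot_notMem hC

@[simp] lemma parts_image (P : Finpartition S) {f : α → β} (hf : Set.InjOn f S) :
    (P.image f hf).parts = P.parts.image (Finset.image f) := rfl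

lemma parts_image_image (P : Finpartition S) {f : α → β} {g : β → α} (hf : Set.InjOn f S)
    (hg : Set.InjOn g (S.image f)) (hgf : ∀ x ∈ S, g (f x) = x) :
    ((P.image f hf).image g hg).parts = P.parts := by
  rw [parts_image, parts_image, Finset.image_image]
  refine (image_congr fun C hC => ?_).trans image_id
  simp only [Function.comp_apply, Finset.image_image]
  exact (image_congr fun x hx => hgf x (P.le hC hx)).trans image_id

lemma NonCrossing.image {P : Finpartition S} (h : P.NonCrossing) {f : α → β}
    (hf : StrictMonoOn f S) : (P.image f hf.injOn).NonCrossing := by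
  rintro ⟨_, _, _, _, hab, hbc, hcd, _, hB, _, hB', hne, hfa, hfc, hfb, hfd⟩
  simp only [parts_image, mem_image] at hB hB'
  obtain ⟨C, hC, rfl⟩ := hB
  obtain ⟨C', hC', rfl⟩ := hB'
  obtain ⟨a, ha, rfl⟩ := mem_image.1 hfa
  obtain ⟨b, hb, rfl⟩ := mem_image.1 hfb
  obtain ⟨c, hc, rfl⟩ := mem_image.1 hfc
  obtain ⟨d, hd, rfl⟩ := mem_image.1 hfd
  have hlt {x y} (hx : x ∈ S) (hy : y ∈ S) : f x < f y ↔ x < y := hf.lt_iff_lt hx hy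
  exact h ⟨a, b, c, d, (hlt (P.le hC ha) (P.le hC' hb)).1 hab,
    (hlt (P.le hC' hb) (P.le hC hc)).1 hbc, (hlt (P.le hC hc) (P.le hC' hd)).1 hcd,
    C, hC, C', hC', ne_of_apply_ne _ hne, ha, hc, hb, hd⟩

end Finpartition

open Finpartition

section NCSum

variable {R : Type*} [CommSemiring R] {α β : Type*} [LinearOrder α] [LinearOrder β]

noncomputable def ncSum (κ : ℕ → R) (S : Finset α) : R :=
  ∑ π ∈ univ.filter (fun π : Finpartition S => π.NonCrossing), ∏ B ∈ π.parts, κ #B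

lemma ncMomentSum_eq_ncSum (κ : ℕ → ℂ) (n : ℕ) :
    ncMomentSum κ n = ncSum κ (univ : Finset (Fin n)) :=
  rfl

lemma ncSum_empty (κ : ℕ → R) : ncSum κ (∅ : Finset α) = 1 := by
  have hP : ∀ π : Finpartition (∅ : Finset α), π.parts = ∅ := fun π =>
    Finpartition.parts_eq_empty_iff.2 rfl
  have hNC : ∀ π : Finpartition (∅ : Finset α), π.NonCrossing := fun π => by
    rintro ⟨-, -, -, -, -, -, -, B, hB, -⟩
    simp [hP π] at hB
  have : Unique (Finpartition (∅ : Finset α)) :=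
    inferInstanceAs (Unique (Finpartition (⊥ : Finset α)))
  rw [ncSum, filter_true_of_mem fun π _ => hNC π, Fintype.sum_unique, hP, prod_empty]

lemma ncSum_image (κ : ℕ → R) {S : Finset α} {f : α → β} (hf : StrictMonoOn f S) :
    ncSum κ (S.image f) = ncSum κ S := by
  rcases S.eq_empty_or_nonempty with rfl | ⟨a, -⟩
  · simp only [Finset.image_empty, ncSum_empty]
  have : Nonempty α := ⟨a⟩
  set g := Function.invFunOn f S
  have hgf : ∀ x ∈ S, g (f x) = x := fun x hx => hf.injOn.leftInvOn_invFunOn hx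
  have hfg : ∀ y ∈ S.image f, f (g y) = y := by
    simp only [mem_image, forall_exists_index, and_imp]
    rintro _ x hx rfl
    rw [hgf x hx]
  have hg : StrictMonoOn g (S.image f) := by
    simp only [StrictMonoOn, coe_image, Set.forall_mem_image]
    intro x hx y hy hxy
    rwa [hgf x hx, hgf y hy, ← hf.lt_iff_lt hx hy]
  have hgS : (S.image f).image g = S := by
    rw [Finset.image_image]
    exact (image_congr fun x hx => hgf x hx).trans image_id
  symm
  refine sum_nbij' (fun P => P.image f hf.injOn) (fun Q => (Q.image g hg.injOn).copy hgS)
    ?_ ?_ ?_ ?_ ?_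
  · simp only [mem_filter, mem_univ, true_and]
    exact fun P hP => hP.image hf
  · simp only [mem_filter, mem_univ, true_and]
    exact fun Q hQ => hQ.image hg
  · intro P _
    exact Finpartition.ext (parts_image_image P hf.injOn hg.injOn hgf)
  · intro Q _
    exact Finpartition.ext (parts_image_image Q hg.injOn (by rw [hgS]; exact hf.injOn) hfg)
  · intro P _
    rw [parts_image, prod_image (P.image_injOn_parts hf.injOn)]
    exact prod_congr rfl fun C hC => by
      rw [card_image_of_injOn (hf.injOn.mono (coe_subset.2 (P.le hC)))]

lemma ncSum_eq_ncMomentSum_card (κ : ℕ → ℂ) (T : Finset ℕ) :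
    ncSum κ T = ncMomentSum κ #T := by
  have h : (univ : Finset (Fin #T)).image (T.orderEmbOfFin rfl) = T := by
    apply coe_injective
    rw [coe_image, coe_univ, Set.image_univ, range_orderEmbOfFin]
  rw [ncMomentSum_eq_ncSum]
  conv_lhs => rw [← h]
  exact ncSum_image κ ((T.orderEmbOfFin rfl).strictMono.strictMonoOn _)

end NCSum

section Gap

def gap (n : ℕ) (B : Finset ℕ) (t : ℕ) : Finset ℕ :=
  (range n).filter fun x => t < x ∧ ∀ u ∈ B, t < u → x < u

variable {n t t' x : ℕ} {B : Finset ℕ}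

lemma mem_gap : x ∈ gap n B t ↔ x < n ∧ t < x ∧ ∀ u ∈ B, t < u → x < u := by
  simp [gap]

lemma gap_subset_range : gap n B t ⊆ range n := filter_subset _ _

lemma disjoint_gap_self : Disjoint (gap n B t) B :=
  disjoint_left.2 fun x hx hxB => (mem_gap.1 hx).2.2 x hxB (mem_gap.1 hx).2.1 |>.false

lemma disjoint_gap (ht : t ∈ B) (ht' : t' ∈ B) (h : t ≠ t') :
    Disjoint (gap n B t) (gap n B t') := by
  refine disjoint_left.2 fun x hx hx' => ?_
  obtain ⟨-, htx, hx⟩ := mem_gap.1 hx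
  obtain ⟨-, htx', hx'⟩ := mem_gap.1 hx'
  rcases h.lt_or_gt with h | h
  · exact ((hx t' ht' h).trans htx').false
  · exact ((hx' t ht h).trans htx).false

lemma exists_mem_gap (h0 : 0 ∈ B) (hx : x < n) (hxB : x ∉ B) : ∃ t ∈ B, x ∈ gap n B t := by
  have hne : (B.filter (· < x)).Nonempty :=
    ⟨0, mem_filter.2 ⟨h0, Nat.pos_of_ne_zero fun h => hxB (h ▸ h0)⟩⟩
  obtain ⟨t, ht, htmax⟩ := exists_max_image _ id hne
  obtain ⟨htB, htx⟩ := mem_filter.1 ht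
  refine ⟨t, htB, mem_gap.2 ⟨hx, htx, fun u hu htu => ?_⟩⟩
  by_contra! hux
  have hux : u < x := lt_of_le_of_ne hux fun h => hxB (h ▸ hu)
  exact (htmax u (mem_filter.2 ⟨hu, hux⟩)).not_gt htu

lemma eq_of_subset_gap {C : Finset ℕ} (hC : C.Nonempty) (ht : t ∈ B) (ht' : t' ∈ B)
    (h : C ⊆ gap n B t) (h' : C ⊆ gap n B t') : t = t' := by
  by_contra htt
  obtain ⟨x, hx⟩ := hC
  exact disjoint_left.1 (disjoint_gap ht ht' htt) (h hx) (h' hx)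

noncomputable def Finpartition.restrictGap (π : Finpartition (range n)) (B : Finset ℕ) (t : ℕ) :
    Finpartition (gap n B t) :=
  π.restrict gap_subset_range

variable {π : Finpartition (range n)}

lemma Finpartition.NonCrossing.subset_gap (hπ : π.NonCrossing) (hB : B ∈ π.parts) (h0 : 0 ∈ B)
    {C : Finset ℕ} (hC : C ∈ π.parts) (hCB : C ≠ B) (ht : t ∈ B) (hx : x ∈ C)
    (hxt : x ∈ gap n B t) : C ⊆ gap n B t := by
  intro y hy
  have hyB : y ∉ B := disjoint_left.1 (π.disjoint hC hB hCB) hy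
  obtain ⟨-, htx, hxB⟩ := mem_gap.1 hxt
  refine mem_gap.2 ⟨mem_range.1 (π.le hC hy), ?_, fun u hu htu => ?_⟩
  · by_contra! hyt
    have hyt : y < t := lt_of_le_of_ne hyt fun h => hyB (h ▸ ht)
    have h0y : 0 < y := Nat.pos_of_ne_zero fun h => hyB (h ▸ h0)
    exact hπ ⟨0, y, t, x, h0y, hyt, htx, B, hB, C, hC, hCB.symm, h0, ht, hy, hx⟩
  · by_contra! huy
    have huy : u < y := lt_of_le_of_ne huy fun h => hyB (h ▸ hu)
    exact hπ ⟨t, x, u, y, htx, hxB u hu htu, huy, B, hB, C, hC, hCB.symm, ht, hu, hx, hy⟩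

lemma Finpartition.NonCrossing.parts_restrictGap (hπ : π.NonCrossing) (hB : B ∈ π.parts)
    (h0 : 0 ∈ B) (ht : t ∈ B) :
    (π.restrictGap B t).parts = π.parts.filter (· ⊆ gap n B t) := by
  ext C
  simp only [Finpartition.restrictGap, Finpartition.restrict, mem_erase, mem_image, mem_filter,
    bot_eq_empty, inf_eq_inter]
  constructor
  · rintro ⟨hCe, D, hD, rfl⟩
    obtain ⟨x, hx⟩ := nonempty_iff_ne_empty.2 hCe
    obtain ⟨hxD, hxt⟩ := mem_inter.1 hx
    have hDB : D ≠ B := by rintro rfl; exact disjoint_left.1 disjoint_gap_self hxt hxD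
    have hDt := hπ.subset_gap hB h0 hD hDB ht hxD hxt
    rw [inter_eq_left.2 hDt]
    exact ⟨hD, hDt⟩
  · rintro ⟨hC, hCt⟩
    exact ⟨(π.nonempty_of_mem_parts hC).ne_empty, C, hC, inter_eq_left.2 hCt⟩

lemma Finpartition.NonCrossing.restrictGap (hπ : π.NonCrossing) (hB : B ∈ π.parts) (h0 : 0 ∈ B)
    (ht : t ∈ B) : (π.restrictGap B t).NonCrossing := by
  rw [NonCrossing, hπ.parts_restrictGap hB h0 ht]
  exact fun ⟨a, b, c, d, hab, hbc, hcd, C, hC, C', hC', h⟩ =>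
    hπ ⟨a, b, c, d, hab, hbc, hcd, C, (mem_filter.1 hC).1, C', (mem_filter.1 hC').1, h⟩

end Gap

section Glue

variable {n : ℕ} {B : Finset ℕ}

lemma supIndep_gap : (univ : Finset B).SupIndep fun t => gap n B t := by
  rw [supIndep_iff_pairwiseDisjoint]
  exact fun t _ t' _ h => disjoint_gap t.2 t'.2 (Subtype.coe_ne_coe.2 h)

lemma sup_gap_sup_eq_range (hB : B ⊆ range n) (h0 : 0 ∈ B) :
    (univ : Finset B).sup (fun t => gap n B t) ⊔ B = range n := by
  refine le_antisymm (sup_le (Finset.sup_le fun _ _ => gap_subset_range) hB) fun x hx => ?_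
  by_cases hxB : x ∈ B
  · exact mem_union_right _ hxB
  obtain ⟨t, ht, hxt⟩ := exists_mem_gap h0 (mem_range.1 hx) hxB
  exact mem_union_left _ (mem_sup.2 ⟨⟨t, ht⟩, mem_univ _, hxt⟩)

noncomputable def glueGaps (hB : B ⊆ range n) (h0 : 0 ∈ B)
    (g : ∀ t : B, Finpartition (gap n B t)) : Finpartition (range n) :=
  (Finpartition.combine g supIndep_gap).extend (ne_empty_of_mem h0)
    (Finset.disjoint_sup_left.2 fun _ _ => disjoint_gap_self) (sup_gap_sup_eq_range hB h0)

variable {hB : B ⊆ range n} {h0 : 0 ∈ B} {g : ∀ t : B, Finpartition (gap n B t)}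

lemma mem_parts_glueGaps {C : Finset ℕ} :
    C ∈ (glueGaps hB h0 g).parts ↔ C = B ∨ ∃ t, C ∈ (g t).parts := by
  simp [glueGaps, Finpartition.extend, Finpartition.combine]

lemma prod_parts_glueGaps {R : Type*} [CommMonoid R] (f : Finset ℕ → R) :
    ∏ C ∈ (glueGaps hB h0 g).parts, f C = f B * ∏ t, ∏ C ∈ (g t).parts, f C := by
  change ∏ C ∈ insert B (univ.biUnion fun t => (g t).parts), f C = _
  rw [prod_insert, prod_biUnion]
  · refine fun t _ t' _ htt' => disjoint_left.2 fun C hC hC' => htt' (Subtype.ext ?_)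
    exact eq_of_subset_gap ((g t).nonempty_of_mem_parts hC) t.2 t'.2 ((g t).le hC) ((g t').le hC')
  · simp only [mem_biUnion, mem_univ, true_and, not_exists]
    exact fun t hBt => disjoint_left.1 disjoint_gap_self ((g t).le hBt h0) h0

lemma nonCrossing_glueGaps (hg : ∀ t, (g t).NonCrossing) : (glueGaps hB h0 g).NonCrossing := by
  rintro ⟨a, b, c, d, hab, hbc, hcd, B₁, hB₁, B₂, hB₂, hne, ha, hc, hb, hd⟩
  rw [mem_parts_glueGaps] at hB₁ hB₂
  rcases hB₁ with rfl | ⟨t, hB₁⟩ <;> rcases hB₂ with rfl | ⟨t', hB₂⟩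
  · exact hne rfl
  · obtain ⟨-, htb, -⟩ := mem_gap.1 ((g t').le hB₂ hb)
    exact ((mem_gap.1 ((g t').le hB₂ hd)).2.2 c hc (htb.trans hbc)).not_gt hcd
  · obtain ⟨-, hta, -⟩ := mem_gap.1 ((g t).le hB₁ ha)
    exact ((mem_gap.1 ((g t).le hB₁ hc)).2.2 b hb (hta.trans hab)).not_gt hbc
  · by_cases htt : t = t'
    · subst htt
      exact hg t ⟨a, b, c, d, hab, hbc, hcd, B₁, hB₁, B₂, hB₂, hne, ha, hc, hb, hd⟩
    -- `b` lies between `a` and `c`, hence in the gap of `t` as well as in that of `t'`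
    obtain ⟨-, hta, -⟩ := mem_gap.1 ((g t).le hB₁ ha)
    obtain ⟨-, -, hc⟩ := mem_gap.1 ((g t).le hB₁ hc)
    obtain ⟨hbn, -, -⟩ := mem_gap.1 ((g t').le hB₂ hb)
    have hbt : b ∈ gap n B t :=
      mem_gap.2 ⟨hbn, hta.trans hab, fun u hu htu => hbc.trans (hc u hu htu)⟩
    exact disjoint_left.1 (disjoint_gap t.2 t'.2 (Subtype.coe_ne_coe.2 htt)) hbt
      ((g t').le hB₂ hb)

lemma restrictGap_glueGaps (hg : ∀ t, (g t).NonCrossing) (t : B) :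
    (glueGaps hB h0 g).restrictGap B t = g t := by
  apply Finpartition.ext
  rw [(nonCrossing_glueGaps hg).parts_restrictGap (mem_parts_glueGaps.2 (.inl rfl)) h0 t.2]
  ext C
  rw [mem_filter, mem_parts_glueGaps]
  constructor
  · rintro ⟨rfl | ⟨t', hC⟩, hCt⟩
    · exact (disjoint_left.1 disjoint_gap_self (hCt h0) h0).elim
    obtain rfl : t' = t :=
      Subtype.ext (eq_of_subset_gap ((g t').nonempty_of_mem_parts hC) t'.2 t.2 ((g t').le hC) hCt)
    exact hC
  · exact fun hC => ⟨.inr ⟨t, hC⟩, (g t).le hC⟩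

lemma Finpartition.NonCrossing.glueGaps_restrictGap {π : Finpartition (range n)}
    (hπ : π.NonCrossing) (hBπ : B ∈ π.parts) :
    glueGaps hB h0 (fun t => π.restrictGap B t) = π := by
  apply Finpartition.ext
  ext C
  simp only [mem_parts_glueGaps, hπ.parts_restrictGap hBπ h0 (Subtype.prop _), mem_filter]
  constructor
  · rintro (rfl | ⟨t, hC, -⟩)
    exacts [hBπ, hC]
  · intro hC
    by_cases hCB : C = B
    · exact .inl hCB
    obtain ⟨x, hx⟩ := π.nonempty_of_mem_parts hC
    have hxB : x ∉ B := disjoint_left.1 (π.disjoint hC hBπ hCB) hx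
    obtain ⟨t, ht, hxt⟩ := exists_mem_gap h0 (mem_range.1 (π.le hC hx)) hxB
    exact .inr ⟨⟨t, ht⟩, hC, hπ.subset_gap hBπ h0 hC hCB ht hx hxt⟩

end Glue

section Recursion

variable {R : Type*} [CommSemiring R]

lemma ncSum_range_eq_sum (κ : ℕ → R) {n : ℕ} (hn : 0 < n) :
    ncSum κ (range n) =
      ∑ B ∈ (range n).powerset with 0 ∈ B, κ #B * ∏ t ∈ B, ncSum κ (gap n B t) := by
  have h0n : 0 ∈ range n := mem_range.2 hn
  rw [ncSum, ← sum_fiberwise_of_maps_to (g := fun π : Finpartition (range n) => π.part 0)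
    (t := {B ∈ (range n).powerset | 0 ∈ B})
    fun π _ => mem_filter.2 ⟨mem_powerset.2 (π.part_subset 0), π.mem_part_self.2 h0n⟩]
  refine sum_congr rfl fun B hB => ?_
  obtain ⟨hBn, h0⟩ := mem_filter.1 hB
  rw [mem_powerset] at hBn
  have hfiber {π : Finpartition (range n)}
      (hπ : π ∈ (univ.filter fun π : Finpartition (range n) => π.NonCrossing).filter
        fun π => π.part 0 = B) :
      π.NonCrossing ∧ B ∈ π.parts := by
    simp only [mem_filter, mem_univ, true_and] at hπ
    exact ⟨hπ.1, hπ.2 ▸ π.part_mem.2 h0n⟩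
  rw [← prod_coe_sort]
  simp only [ncSum]
  rw [prod_univ_sum, mul_sum]
  refine sum_nbij' (fun π t => π.restrictGap B t) (glueGaps hBn h0) ?_ ?_ ?_ ?_ ?_
  · intro π hπ
    obtain ⟨hNC, hBπ⟩ := hfiber hπ
    simp only [Fintype.mem_piFinset, mem_filter, mem_univ, true_and]
    exact fun t => hNC.restrictGap hBπ h0 t.2
  · intro g hg
    simp only [Fintype.mem_piFinset, mem_filter, mem_univ, true_and] at hg ⊢
    exact ⟨nonCrossing_glueGaps hg,
      Finpartition.part_eq_of_mem _ (mem_parts_glueGaps.2 (.inl rfl)) h0⟩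
  · intro π hπ
    obtain ⟨hNC, hBπ⟩ := hfiber hπ
    exact hNC.glueGaps_restrictGap hBπ
  · intro g hg
    simp only [Fintype.mem_piFinset, mem_filter, mem_univ, true_and] at hg
    exact funext (restrictGap_glueGaps hg)
  · intro π hπ
    obtain ⟨hNC, hBπ⟩ := hfiber hπ
    conv_lhs => rw [← hNC.glueGaps_restrictGap (hB := hBn) (h0 := h0) hBπ]
    exact prod_parts_glueGaps _

end Recursion

section Compositions

/-- The `i`-th element of the block `{b₀ < b₁ < ⋯}` with `b₀ = 0` whose consecutive gaps
have sizes `c 0, c 1, …`. -/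
def blockElem (c : ℕ →₀ ℕ) (i : ℕ) : ℕ := i + ∑ k ∈ range i, c k

def blockOfGaps (c : ℕ →₀ ℕ) (j : ℕ) : Finset ℕ := (range j).image (blockElem c)

variable {c : ℕ →₀ ℕ} {i j n : ℕ}

@[simp] lemma blockElem_zero (c : ℕ →₀ ℕ) : blockElem c 0 = 0 := by simp [blockElem]

lemma blockElem_succ (c : ℕ →₀ ℕ) (i : ℕ) : blockElem c (i + 1) = blockElem c i + c i + 1 := by
  simp only [blockElem, sum_range_succ]
  ring

lemma strictMono_blockElem (c : ℕ →₀ ℕ) : StrictMono (blockElem c) :=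
  strictMono_nat_of_lt_succ fun i => by rw [blockElem_succ]; omega

lemma blockElem_eq_of_mem_finsuppAntidiag (hc : c ∈ finsuppAntidiag (range j) (n - j))
    (hj : j ≤ n) : blockElem c j = n := by
  rw [blockElem, (mem_finsuppAntidiag.1 hc).1]
  omega

lemma card_blockOfGaps (c : ℕ →₀ ℕ) (j : ℕ) : #(blockOfGaps c j) = j := by
  rw [blockOfGaps, card_image_of_injective _ (strictMono_blockElem c).injective, card_range]

lemma mem_blockOfGaps {b : ℕ} : b ∈ blockOfGaps c j ↔ ∃ i < j, blockElem c i = b := by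
  simp [blockOfGaps]

section

variable (hc : c ∈ finsuppAntidiag (range j) (n - j)) (hj : j ≤ n)
include hc hj

lemma blockOfGaps_subset_range : blockOfGaps c j ⊆ range n := by
  intro b hb
  obtain ⟨i, hi, rfl⟩ := mem_blockOfGaps.1 hb
  exact mem_range.2 (blockElem_eq_of_mem_finsuppAntidiag hc hj ▸ strictMono_blockElem c hi)

lemma gap_blockOfGaps (hi : i < j) :
    gap n (blockOfGaps c j) (blockElem c i) = Ioo (blockElem c i) (blockElem c (i + 1)) := by
  have hmono := (strictMono_blockElem c).monotone
  have hlast := blockElem_eq_of_mem_finsuppAntidiag hc hj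
  ext x
  rw [mem_gap, mem_Ioo]
  constructor
  · rintro ⟨hxn, hix, hx⟩
    refine ⟨hix, ?_⟩
    rcases (show i + 1 ≤ j from hi).lt_or_eq with h | h
    · exact hx _ (mem_blockOfGaps.2 ⟨i + 1, h, rfl⟩) (strictMono_blockElem c i.lt_succ_self)
    · rwa [h, hlast]
  · rintro ⟨hix, hxi⟩
    refine ⟨hxi.trans_le (hlast ▸ hmono hi), hix, fun u hu hiu => ?_⟩
    obtain ⟨k, -, rfl⟩ := mem_blockOfGaps.1 hu
    exact hxi.trans_le (hmono ((strictMono_blockElem c).lt_iff_lt.1 hiu))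

lemma card_gap_blockOfGaps (hi : i < j) : #(gap n (blockOfGaps c j) (blockElem c i)) = c i := by
  rw [gap_blockOfGaps hc hj hi, Nat.card_Ioo, blockElem_succ]
  omega

end

lemma blockElem_eq_orderEmbOfFin {B : Finset ℕ} (hB : blockOfGaps c j = B) (h : #B = j)
    (hi : i < j) : blockElem c i = B.orderEmbOfFin h ⟨i, hi⟩ := by
  subst hB
  have := orderEmbOfFin_unique h (f := fun k : Fin j => blockElem c k)
    (fun k => mem_blockOfGaps.2 ⟨k, k.2, rfl⟩) fun k k' h => strictMono_blockElem c h
  exact congrFun this ⟨i, hi⟩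

lemma exists_blockElem_eq {s : ℕ → ℕ} (hs0 : s 0 = 0) (hs : ∀ i < j, s i < s (i + 1)) :
    ∃ c ∈ finsuppAntidiag (range j) (s j - j), ∀ i ≤ j, blockElem c i = s i := by
  let c : ℕ →₀ ℕ := Finsupp.onFinset (range j)
    (fun i => if i < j then s (i + 1) - s i - 1 else 0) fun i hi => by
      rw [mem_range]; by_contra h; exact hi (if_neg h)
  have hcs : ∀ i ≤ j, blockElem c i = s i := by
    intro i
    induction i with
    | zero => simp [hs0]
    | succ i ih =>
      intro hi
      have := hs i hi
      rw [blockElem_succ, ih (by omega), Finsupp.onFinset_apply, if_pos (show i < j from hi)]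
      omega
  refine ⟨c, mem_finsuppAntidiag.2 ⟨?_, Finsupp.support_onFinset_subset⟩, hcs⟩
  rw [← hcs j le_rfl, blockElem]
  exact (Nat.add_sub_cancel_left ..).symm

lemma exists_blockOfGaps_eq {B : Finset ℕ} (hBn : B ⊆ range n) (h0 : 0 ∈ B) (hB : #B = j) :
    ∃ c ∈ finsuppAntidiag (range j) (n - j), blockOfGaps c j = B := by
  have hj : 0 < j := hB ▸ card_pos.2 ⟨0, h0⟩
  set s : ℕ → ℕ := fun i => if h : i < j then B.orderEmbOfFin hB ⟨i, h⟩ else n with hs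
  have hs_lt : ∀ i < j, s i < s (i + 1) := by
    intro i hi
    simp only [hs, dif_pos hi]
    split_ifs with h
    · exact (B.orderEmbOfFin hB).strictMono (Fin.mk_lt_mk.2 i.lt_succ_self)
    · exact mem_range.1 (hBn (B.orderEmbOfFin_mem hB _))
  have hs0 : s 0 = 0 := by
    simp only [hs, dif_pos hj, orderEmbOfFin_zero hB hj]
    exact Nat.le_zero.1 (B.min'_le 0 h0)
  obtain ⟨c, hc, hcs⟩ := exists_blockElem_eq hs0 hs_lt
  rw [show s j = n from dif_neg (lt_irrefl j)] at hc
  refine ⟨c, hc, ?_⟩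
  ext b
  rw [mem_blockOfGaps]
  constructor
  · rintro ⟨i, hi, rfl⟩
    simp only [hcs i hi.le, hs, dif_pos hi]
    exact B.orderEmbOfFin_mem hB _
  · intro hb
    obtain ⟨⟨i, hi⟩, rfl⟩ : b ∈ Set.range (B.orderEmbOfFin hB) := by
      rwa [range_orderEmbOfFin]
    exact ⟨i, hi, by simp only [hcs i hi.le, hs, dif_pos hi]⟩

lemma sum_blocks_eq_sum_finsuppAntidiag {R : Type*} [CommSemiring R] (a : ℕ → R) (hj : 0 < j)
    (hjn : j ≤ n) :
    ∑ B ∈ {B ∈ (range n).powerset | 0 ∈ B} with #B = j, ∏ t ∈ B, a #(gap n B t) =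
      ∑ c ∈ finsuppAntidiag (range j) (n - j), ∏ i ∈ range j, a (c i) := by
  symm
  refine sum_bij (fun c _ => blockOfGaps c j) (fun c hc => ?_) (fun c hc c' hc' h => ?_)
    (fun B hB => ?_) (fun c hc => ?_)
  · simp only [mem_filter, mem_powerset]
    exact ⟨⟨blockOfGaps_subset_range hc hjn,
      mem_blockOfGaps.2 ⟨0, hj, blockElem_zero c⟩⟩, card_blockOfGaps c j⟩
  · ext i
    by_cases hi : i < j
    · rw [← card_gap_blockOfGaps hc hjn hi, ← card_gap_blockOfGaps hc' hjn hi, h,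
        blockElem_eq_orderEmbOfFin h (card_blockOfGaps c' j) hi,
        blockElem_eq_orderEmbOfFin rfl (card_blockOfGaps c' j) hi]
    · have hsupp {c} (hc : c ∈ finsuppAntidiag (range j) (n - j)) : c i = 0 :=
        Finsupp.notMem_support_iff.1 fun h => hi (mem_range.1 ((mem_finsuppAntidiag.1 hc).2 h))
      rw [hsupp hc, hsupp hc']
  · simp only [mem_filter, mem_powerset] at hB
    obtain ⟨c, hc, rfl⟩ := exists_blockOfGaps_eq hB.1.1 hB.1.2 hB.2
    exact ⟨c, hc, rfl⟩
  · rw [blockOfGaps, prod_image (strictMono_blockElem c).injective.injOn]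
    exact prod_congr rfl fun i hi =>
      congrArg a (card_gap_blockOfGaps hc hjn (mem_range.1 hi)).symm

end Compositions

lemma ncMomentSum_zero (κ : ℕ → ℂ) : ncMomentSum κ 0 = 1 := by
  rw [← card_range 0, ← ncSum_eq_ncMomentSum_card, range_zero, ncSum_empty]

lemma ncMomentSum_eq_sum (κ : ℕ → ℂ) {n : ℕ} (hn : 0 < n) :
    ncMomentSum κ n = ∑ j ∈ Icc 1 n,
      κ j * ∑ c ∈ finsuppAntidiag (range j) (n - j), ∏ i ∈ range j, ncMomentSum κ (c i) := by
  have hcard : ∀ B ∈ {B ∈ (range n).powerset | 0 ∈ B}, #B ∈ Icc 1 n := by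
    simp only [mem_filter, mem_powerset, mem_Icc]
    exact fun B hB => ⟨card_pos.2 ⟨0, hB.2⟩, card_range n ▸ card_le_card hB.1⟩
  rw [← card_range n, ← ncSum_eq_ncMomentSum_card, card_range, ncSum_range_eq_sum κ hn,
    ← sum_fiberwise_of_maps_to hcard]
  refine sum_congr rfl fun j hj => ?_
  obtain ⟨hj, hjn⟩ := mem_Icc.1 hj
  rw [← sum_blocks_eq_sum_finsuppAntidiag _ hj hjn, mul_sum]
  refine sum_congr rfl fun B hB => ?_
  simp only [(mem_filter.1 hB).2, ncSum_eq_ncMomentSum_card]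

lemma PowerSeries.coeff_X_mul_pow {R : Type*} [CommSemiring R] (L : R⟦X⟧) {j n : ℕ}
    (h : j ≤ n) : coeff n ((X * L) ^ j) =
      ∑ c ∈ finsuppAntidiag (range j) (n - j), ∏ i ∈ range j, coeff (c i) L := by
  rw [mul_pow, coeff_X_pow_mul', if_pos h, coeff_pow]

lemma PowerSeries.coeff_pow_eq_of_trunc_eq {R : Type*} [CommSemiring R] {f g : R⟦X⟧} {n : ℕ}
    (h : trunc (n + 1) f = trunc (n + 1) g) (j : ℕ) : coeff n (f ^ j) = coeff n (g ^ j) := by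
  have key (φ : R⟦X⟧) : coeff n φ = (trunc (n + 1) φ).coeff n := by
    rw [coeff_trunc, if_pos n.lt_succ_self]
  rw [key, ← trunc_trunc_pow, h, trunc_trunc_pow, ← key]

lemma coeff_substZL_of_pos (K L : PowerSeries ℂ) {n : ℕ} (hn : 0 < n) :
    coeff n (substZL K L) = ∑ j ∈ Icc 1 n,
      coeff j K * ∑ c ∈ finsuppAntidiag (range j) (n - j), ∏ i ∈ range j, coeff (c i) L := by
  rw [substZL, coeff_mk, ← sum_subset (s₁ := Icc 1 n)]
  · exact sum_congr rfl fun j hj => by rw [coeff_X_mul_pow L (mem_Icc.1 hj).2]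
  · intro j hj
    simp only [mem_Icc, mem_range] at hj ⊢
    omega
  · intro j hjn hj
    obtain rfl : j = 0 := by simp only [mem_Icc, mem_range] at hjn hj; omega
    rw [pow_zero, coeff_one, if_neg hn.ne', mul_zero]

lemma coeff_substZL_congr {K L L' : PowerSeries ℂ} {n : ℕ} (h : ∀ k < n, coeff k L = coeff k L') :
    coeff n (substZL K L) = coeff n (substZL K L') := by
  have htrunc : trunc (n + 1) (X * L) = trunc (n + 1) (X * L') := by
    ext k
    rw [coeff_trunc, coeff_trunc]
    split_ifs with hk
    · rcases k with _ | k
      · simp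
      · rw [coeff_succ_X_mul, coeff_succ_X_mul, h k (by omega)]
    · rfl
  simp only [substZL, coeff_mk, coeff_pow_eq_of_trunc_eq htrunc]

lemma eq_of_eq_substZL {K L L' : PowerSeries ℂ} (hL : L = substZL K L)
    (hL' : L' = substZL K L') : L = L' := by
  ext n
  induction n using Nat.strong_induction_on with
  | _ n ih => rw [hL, hL', coeff_substZL_congr ih]

lemma mk_ncMomentSum_eq_substZL (κ : ℕ → ℂ) :
    PowerSeries.mk (ncMomentSum κ) =
      substZL (PowerSeries.mk fun n => if n = 0 then 1 else κ n)
        (PowerSeries.mk (ncMomentSum κ)) := by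
  ext n
  rcases n.eq_zero_or_pos with rfl | hn
  · simp [substZL, ncMomentSum_zero]
  rw [coeff_mk, coeff_substZL_of_pos _ _ hn, ncMomentSum_eq_sum κ hn]
  refine sum_congr rfl fun j hj => ?_
  simp [(Nat.one_le_iff_ne_zero.1 (mem_Icc.1 hj).1)]

/-- Two sequences `(m_n)`, `(κ_n)` satisfy the free moment-cumulant relations
`m_n = ∑_{π ∈ NC(n)} ∏_{B ∈ π} κ_{|B|}` for all `n ≥ 1` if and only if the generating
functions `L(z) = 1 + ∑ m_n zⁿ` and `K(z) = 1 + ∑ κ_n zⁿ` satisfy `L(z) = K(z L(z))`. -/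
theorem free_moment_cumulant_iff_generating_function (m κ : ℕ → ℂ) :
    (∀ n : ℕ, 1 ≤ n → m n = ncMomentSum κ n) ↔
      (PowerSeries.mk fun n => if n = 0 then 1 else m n) =
        substZL (PowerSeries.mk fun n => if n = 0 then 1 else κ n)
          (PowerSeries.mk fun n => if n = 0 then 1 else m n) := by
  have hM := mk_ncMomentSum_eq_substZL κ
  have hLM : (∀ n, 1 ≤ n → m n = ncMomentSum κ n) ↔
      (PowerSeries.mk fun n => if n = 0 then 1 else m n) = PowerSeries.mk (ncMomentSum κ) := by
    simp only [PowerSeries.ext_iff, coeff_mk]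
    refine ⟨fun h n => ?_, fun h n hn => by simpa [Nat.one_le_iff_ne_zero.1 hn] using h n⟩
    rcases n.eq_zero_or_pos with rfl | hn
    · simp [ncMomentSum_zero]
    · simp [hn.ne', h n hn]
  rw [hLM]
  exact ⟨fun h => h ▸ hM, fun h => eq_of_eq_substZL h hM⟩
end
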